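/- In a VW-CCG derivation tree, every argument /X or \X occurring in the category labeling any node also occurs as an argument of some category in the lexicon of the grammar. -/
import Mathlib



/-- Categories of VW-CCG over atomic categories coded by natural numbers.
`slash d X Y` is `X /ᵈ Y` where `d = true` is a forward slash `/` and
`d = false` is a backward slash `\`. -/
inductive Cat : Type where
  | atom : ℕ → Cat
  | slash : Bool → Cat → Cat → Cat
deriving DecidableEq

namespace Cat

/-- The target (innermost atomic category). -/
def target : Cat → ℕ
  | atom a => a
  | slash _ X _ => X.target

/-- The argument stack of a category, bottom of the stack first. -/
def args : Cat → List (Bool × Cat)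
  | atom _ => []
  | slash d X Y => X.args ++ [(d, Y)]

/-- The number of arguments of a category. -/
def numArgs (X : Cat) : ℕ := X.args.length

/-- The size (number of symbols) of a category. -/
def size : Cat → ℕ
  | atom _ => 1
  | slash _ X Y => X.size + Y.size + 1

/-- `ArgOccurs p X` holds if the slash–category pair `p` occurs as an
argument somewhere inside the category `X`. -/
def ArgOccurs (p : Bool × Cat) : Cat → Prop
  | atom _ => False
  | slash d X Y => (d, Y) = p ∨ ArgOccurs p X ∨ ArgOccurs p Y

end Cat

/-- Build `A /₁ X₁ ⋯ /ₘ Xₘ` from a target and an argument list. -/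
def Cat.mk' (t : ℕ) (as : List (Bool × Cat)) : Cat :=
  as.foldl (fun c p => Cat.slash p.1 c p.2) (Cat.atom t)

/-- Push additional arguments on the stack of a category. -/
def appendArgs (X : Cat) (zs : List (Bool × Cat)) : Cat :=
  zs.foldl (fun c p => Cat.slash p.1 c p.2) X

/-- A VW-CCG combinatory rule: a (forward or backward) combinatory schema of
degree `zRestr.length`, optionally restricting the target of the variable `X`,
the category `Y`, and the slashes and categories of the arguments
`/₁ Z₁ ⋯ /_d Z_d` of the secondary input. -/
structure Rule where
  fwd : Bool
  tRestr : Option ℕ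
  yRestr : Option Cat
  zRestr : List (Bool × Option Cat)

/-- The degree of a rule. -/
def Rule.degree (r : Rule) : ℕ := r.zRestr.length

/-- `r.Inst L R O` holds if `L R ⇛ O` is a ground instance of the rule `r`:
forward: `X/Y  Y/₁Z₁⋯/_dZ_d ⇛ X/₁Z₁⋯/_dZ_d`;
backward: `Y/₁Z₁⋯/_dZ_d  X\Y ⇛ X/₁Z₁⋯/_dZ_d`, respecting the restrictions. -/
def Rule.Inst (r : Rule) (L R O : Cat) : Prop :=
  ∃ (X Y : Cat) (zs : List (Bool × Cat)),
    (∀ t, r.tRestr = some t → X.target = t) ∧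
    (∀ Y', r.yRestr = some Y' → Y = Y') ∧
    List.Forall₂ (fun (p : Bool × Option Cat) (z : Bool × Cat) =>
      z.1 = p.1 ∧ ∀ Z, p.2 = some Z → z.2 = Z) r.zRestr zs ∧
    O = appendArgs X zs ∧
    (if r.fwd then L = Cat.slash true X Y ∧ R = appendArgs Y zs
     else R = Cat.slash false X Y ∧ L = appendArgs Y zs)

/-- A VW-CCG grammar: a finite lexicon assigning categories to vocabulary
symbols (coded by naturals) or to the empty string (`none`), a finite set of
combinatory rules, and a distinguished atomic category. -/
structure Grammar where
  lex : List (Option ℕ × Cat)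
  rules : List Rule
  start : ℕ

/-- A grammar is ε-free if no lexicon entry is for the empty string. -/
def Grammar.EpsFree (G : Grammar) : Prop := ∀ e ∈ G.lex, e.1 ≠ none

/-- Derivation trees: leaves carry lexicon entries (`none` = empty string),
internal nodes carry categories and have exactly two children. -/
inductive DTree where
  | leaf : Option ℕ → Cat → DTree
  | node : Cat → DTree → DTree → DTree

namespace DTree

/-- The category at the root. -/
def top : DTree → Cat
  | leaf _ X => X
  | node X _ _ => X

/-- The yield: left-to-right concatenation of the symbols at the leaves. -/
def yield : DTree → List ℕ
  | leaf none _ => []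
  | leaf (some σ) _ => [σ]
  | node _ l r => l.yield ++ r.yield

/-- The total number of nodes. -/
def nodes : DTree → ℕ
  | leaf _ _ => 1
  | node _ l r => l.nodes + r.nodes + 1

/-- `τ.Valid G`: `τ` is a derivation tree of the grammar `G`. -/
def Valid (G : Grammar) : DTree → Prop
  | leaf σ X => (σ, X) ∈ G.lex
  | node X l r => Valid G l ∧ Valid G r ∧ ∃ rl ∈ G.rules, rl.Inst l.top r.top X

/-- `τ.CatAt C`: the category `C` labels some node of `τ`. -/
def CatAt : DTree → Cat → Prop
  | leaf _ X, C => C = X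
  | node X l r, C => C = X ∨ l.CatAt C ∨ r.CatAt C

end DTree

/-- The language generated by a grammar. -/
def Grammar.Lang (G : Grammar) : Set (List ℕ) :=
  { w | ∃ τ : DTree, τ.Valid G ∧ τ.top = Cat.atom G.start ∧ τ.yield = w }

theorem DTree.catAt_top (t : DTree) : t.CatAt t.top := by
  cases t <;> simp [DTree.CatAt, DTree.top]

theorem argOccurs_appendArgs (p : Bool × Cat) (Y : Cat) (zs : List (Bool × Cat)) :
    Cat.ArgOccurs p (appendArgs Y zs) ↔
      Cat.ArgOccurs p Y ∨ ∃ z ∈ zs, z = p ∨ Cat.ArgOccurs p z.2 := by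
  induction zs generalizing Y with
  | nil => simp [appendArgs]
  | cons z zs ih =>
    show Cat.ArgOccurs p (appendArgs (Cat.slash z.1 Y z.2) zs) ↔ _
    rw [ih]
    have hz : Cat.ArgOccurs p (Cat.slash z.1 Y z.2) ↔
        (z = p ∨ Cat.ArgOccurs p Y ∨ Cat.ArgOccurs p z.2) := by
      simp [Cat.ArgOccurs]
    rw [hz]
    simp only [List.mem_cons]
    constructor
    · rintro ((h | h | h) | ⟨w, hw, h⟩)
      · exact Or.inr ⟨z, Or.inl rfl, Or.inl h⟩
      · exact Or.inl h
      · exact Or.inr ⟨z, Or.inl rfl, Or.inr h⟩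
      · exact Or.inr ⟨w, Or.inr hw, h⟩
    · rintro (h | ⟨w, rfl | hw, h⟩)
      · exact Or.inl (Or.inr (Or.inl h))
      · rcases h with h | h
        · exact Or.inl (Or.inl h)
        · exact Or.inl (Or.inr (Or.inr h))
      · exact Or.inr ⟨w, hw, h⟩

/-- Lemma 3.1 of Vijay-Shanker and Weir (1994): every argument occurring in
the category labeling any node of a derivation tree also occurs as an
argument of some category in the lexicon of the grammar. -/
theorem arg_occurs_in_lexicon (G : Grammar) (τ : DTree) (hτ : τ.Valid G) :
    ∀ C : Cat, τ.CatAt C → ∀ p : Bool × Cat, Cat.ArgOccurs p C →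
      ∃ e ∈ G.lex, Cat.ArgOccurs p e.2 := by
  induction τ with
  | leaf σ X =>
    intro C hC p hp
    exact ⟨(σ, X), hτ, hC ▸ hp⟩
  | node X l r ihl ihr =>
    obtain ⟨hl, hr, rl, _, X', Y, zs, _, _, _, hO, hfb⟩ := hτ
    intro C hC p hp
    rcases hC with hC | hC | hC
    · subst hC
      have key : ∀ t : DTree, t.Valid G → t.top = appendArgs Y zs →
          (∀ C, t.CatAt C → ∀ q, Cat.ArgOccurs q C → ∃ e ∈ G.lex, Cat.ArgOccurs q e.2) →
          (∃ z ∈ zs, z = p ∨ Cat.ArgOccurs p z.2) →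
          ∃ e ∈ G.lex, Cat.ArgOccurs p e.2 := by
        intro t _ ht iht hzs
        apply iht t.top (DTree.catAt_top t) p
        rw [ht, argOccurs_appendArgs]
        exact Or.inr hzs
      rcases (argOccurs_appendArgs p X' zs).1 (hO ▸ hp) with h | hzs
      · split_ifs at hfb with hf
        · exact ihl hl l.top (DTree.catAt_top l) p
            (by rw [hfb.1]; exact Or.inr (Or.inl h))
        · exact ihr hr r.top (DTree.catAt_top r) p
            (by rw [hfb.1]; exact Or.inr (Or.inl h))
      · split_ifs at hfb with hf
        · exact key r hr hfb.2 (ihr hr) hzs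
        · exact key l hl hfb.2 (ihl hl) hzs
    · exact ihl hl C hC p hp
    · exact ihr hr C hC p hp
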